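/- Let λ ⊆ ℕ^x be a Ferrers diagram with exactly m + x + 1 elements that contains μ_x and has reduced dimension x, and suppose 3m < 2x (i.e. the density m/x is below 2/3). Then at least 2x − 3m of the components of the skew diagram λ ∖ μ_x are of type σ_2. -/

import Mathlib

/-- A Ferrers diagram in `ℕ^k`: a finite nonempty downward-closed subset of `Fin k → ℕ`. -/
def IsFerrers {k : ℕ} (F : Finset (Fin k → ℕ)) : Prop :=
  F.Nonempty ∧ ∀ a ∈ F, ∀ x : Fin k → ℕ, (∀ i, x i ≤ a i) → x ∈ F

/-- A Ferrers diagram is strict if every coordinate is used by some element. -/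
def IsStrict {k : ℕ} (F : Finset (Fin k → ℕ)) : Prop :=
  ∀ i : Fin k, ∃ a ∈ F, a i ≠ 0

/-- `numPart d n` = `p_d(n)`, the number of Ferrers diagrams in `ℕ^(d+1)` with `n` elements. -/
noncomputable def numPart (d n : ℕ) : ℕ :=
  Nat.card {F : Finset (Fin (d + 1) → ℕ) // IsFerrers F ∧ F.card = n}

/-- `Amat n r` = `a_{n,r}`, the number of strict Ferrers diagrams in `ℕ^r` with `n` elements. -/
noncomputable def Amat (n r : ℕ) : ℕ :=
  Nat.card {F : Finset (Fin r → ℕ) // IsFerrers F ∧ IsStrict F ∧ F.card = n}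

/-- `mu r` = `μ_r = {0, e_1, …, e_r} ⊆ ℕ^r`. -/
def mu (r : ℕ) : Finset (Fin r → ℕ) :=
  insert 0 (Finset.univ.image fun i => Pi.single i 1)

/-- The reduced dimension of a Ferrers diagram `F ⊆ ℕ^x` (containing `μ_x`): the number of
coordinates used by some element of `F \ μ_x`. -/
noncomputable def rdim {x : ℕ} (F : Finset (Fin x → ℕ)) : ℕ :=
  Nat.card {i : Fin x // ∃ a ∈ F \ mu x, a i ≠ 0}

/-- Two coordinates are touched by a common element of the skew diagram `σ`. -/
def Touches {x : ℕ} (σ : Finset (Fin x → ℕ)) (i j : Fin x) : Prop :=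
  ∃ a ∈ σ, a i ≠ 0 ∧ a j ≠ 0

/-- `B` is a block of the finest partition of `Fin x` compatible with `σ`,
i.e. an equivalence class of the equivalence relation generated by `Touches σ`. -/
def IsBlock {x : ℕ} (σ : Finset (Fin x → ℕ)) (B : Set (Fin x)) : Prop :=
  ∃ i : Fin x, B = {j | Relation.EqvGen (Touches σ) i j}

/-- The support of `a` is contained in `B`. -/
def SuppIn {x : ℕ} (a : Fin x → ℕ) (B : Set (Fin x)) : Prop :=
  ∀ i, a i ≠ 0 → i ∈ B

/-- The component of `σ` with block `B` is of type `σ₂`: `B = {i, j}` with `i ≠ j`, and the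
elements of `σ` supported in `B` are exactly `{e_i + e_j}`. -/
def IsSigma2 {x : ℕ} (σ : Finset (Fin x → ℕ)) (B : Set (Fin x)) : Prop :=
  ∃ i j : Fin x, i ≠ j ∧ B = {i, j} ∧
    {a ∈ (σ : Set (Fin x → ℕ)) | SuppIn a B} = {Pi.single i 1 + Pi.single j 1}

/-- `Cmat m x` = `c_{m,x}`. -/
noncomputable def Cmat (m x : ℕ) : ℕ :=
  Nat.card {F : Finset (Fin x → ℕ) //
    IsFerrers F ∧ mu x ⊆ F ∧ F.card = m + x + 1 ∧ rdim F = x}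

/-- `Dmat m x` = `d_{m,x}`. -/
noncomputable def Dmat (m x : ℕ) : ℕ :=
  Nat.card {F : Finset (Fin x → ℕ) //
    IsFerrers F ∧ mu x ⊆ F ∧ F.card = m + x + 1 ∧ rdim F = x ∧
      ∀ B : Set (Fin x), IsBlock (F \ mu x) B → ¬ IsSigma2 (F \ mu x) B}

/-- A point of type 1: `e_i + e_j` for some `i ≠ j`. -/
def IsType1 {r : ℕ} (a : Fin r → ℕ) : Prop :=
  ∃ i j : Fin r, i ≠ j ∧ a = Pi.single i 1 + Pi.single j 1

/-- A point of type 2: `2·e_i` for some `i`. -/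
def IsType2 {r : ℕ} (a : Fin r → ℕ) : Prop :=
  ∃ i : Fin r, a = Pi.single i 2

/-- `Fmat n r` = `f_{n,r}`. -/
noncomputable def Fmat (n r : ℕ) : ℕ :=
  Nat.card {F : Finset (Fin r → ℕ) //
    IsFerrers F ∧ mu r ⊆ F ∧ F.card = n ∧
      ∀ B : Set (Fin r), IsBlock (F \ mu r) B →
        ∃ a ∈ F \ mu r, SuppIn a B ∧ ¬ IsType1 a}


/-!
Join `i ≠ j` by an edge when `e_i + e_j ∈ σ = λ ∖ μ_x`. Since `λ` is downward closed, every
element of `σ` whose support contains `i` and `j` forces `e_i + e_j ∈ σ`, so the blocks of `σ`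
are exactly the connected components of this graph. A component on `b` vertices has at least
`b - 1` edges, hence, as every coordinate is used, contains at least `max 1 (b - 1)` elements
of `σ`; and `2 b ≤ 3 max 1 (b - 1)` fails only for `b = 2` with a single element, which must
then be the edge point `e_i + e_j`: a component of type `σ₂`. Summing over the components
gives `2 x ≤ 3 m + #σ₂`.
-/

open Finset

section PairPoints

variable {ι : Type*} [DecidableEq ι]

lemma single_add_single_ne_zero_iff {i j k : ι} :
    (Pi.single i 1 + Pi.single j 1 : ι → ℕ) k ≠ 0 ↔ k = i ∨ k = j := by
  by_cases hi : k = i <;> by_cases hj : k = j <;> simp [Pi.single_apply, hi, hj]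

def edgePt (z : Sym2 ι) : ι → ℕ :=
  Sym2.lift ⟨fun i j => Pi.single i 1 + Pi.single j 1, fun _ _ => add_comm _ _⟩ z

lemma edgePt_mk (i j : ι) : edgePt s(i, j) = Pi.single i 1 + Pi.single j 1 := rfl

lemma edgePt_ne_zero_iff {z : Sym2 ι} {k : ι} : edgePt z k ≠ 0 ↔ k ∈ z := by
  induction z using Sym2.ind with
  | h i j => rw [edgePt_mk, single_add_single_ne_zero_iff, Sym2.mem_iff]

lemma edgePt_injective : Function.Injective (edgePt (ι := ι)) := fun z z' h =>
  Sym2.ext fun k => by rw [← edgePt_ne_zero_iff, h, edgePt_ne_zero_iff]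

end PairPoints

lemma SimpleGraph.sum_card_supp_eq_card {V : Type*} [Fintype V] (G : SimpleGraph V)
    [Fintype G.ConnectedComponent] :
    ∑ c : G.ConnectedComponent, Nat.card c.supp = Fintype.card V := by
  classical
  rw [← card_univ, card_eq_sum_card_fiberwise (f := G.connectedComponentMk) (t := univ)
    fun _ _ => mem_univ _]
  refine sum_congr rfl fun c _ => ?_
  rw [Nat.card_eq_card_toFinset]
  congr 1
  ext v
  simp [ConnectedComponent.mem_supp_iff]

section SkewDiagram

variable {n : ℕ} (σ : Finset (Fin n → ℕ))

def PairClosed : Prop :=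
  ∀ a ∈ σ, ∀ i j, i ≠ j → a i ≠ 0 → a j ≠ 0 → Pi.single i 1 + Pi.single j 1 ∈ σ

def pairGraph : SimpleGraph (Fin n) where
  Adj i j := i ≠ j ∧ Pi.single i 1 + Pi.single j 1 ∈ σ
  symm := ⟨fun _ _ h => ⟨h.1.symm, add_comm (Pi.single _ 1 : Fin n → ℕ) _ ▸ h.2⟩⟩
  loopless := ⟨fun _ h => h.1 rfl⟩

variable {σ}

lemma eqvGen_touches_iff_reachable (hσ : PairClosed σ) {i j : Fin n} :
    Relation.EqvGen (Touches σ) i j ↔ (pairGraph σ).Reachable i j := by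
  have htouch : Touches σ ≤ (pairGraph σ).Reachable := by
    rintro i j ⟨a, ha, hi, hj⟩
    by_cases hij : i = j
    · exact hij ▸ .rfl
    · exact SimpleGraph.Adj.reachable ⟨hij, hσ a ha i j hij hi hj⟩
  have hadj : (pairGraph σ).Adj ≤ Touches σ := fun i j h =>
    ⟨_, h.2, single_add_single_ne_zero_iff.2 (.inl rfl),
      single_add_single_ne_zero_iff.2 (.inr rfl)⟩
  constructor
  · intro h
    exact (SimpleGraph.reachable_is_equivalence _).eqvGen_iff.1
      (Relation.EqvGen.mono htouch _ _ h)
  · intro h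
    rw [SimpleGraph.reachable_iff_reflTransGen] at h
    exact Relation.EqvGen.mono hadj _ _ (Relation.EqvGen.reflTransGen_le_eqvGen _ _ _ h)

lemma isBlock_supp (hσ : PairClosed σ) (c : (pairGraph σ).ConnectedComponent) :
    IsBlock σ c.supp := by
  induction c using SimpleGraph.ConnectedComponent.ind with
  | h i =>
    refine ⟨i, Set.ext fun j => ?_⟩
    rw [Set.mem_ofPred_eq, eqvGen_touches_iff_reachable hσ,
      SimpleGraph.ConnectedComponent.mem_supp_iff, SimpleGraph.ConnectedComponent.eq]
    exact ⟨fun h => h.symm, fun h => h.symm⟩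

lemma suppIn_supp_of_ne_zero (hσ : PairClosed σ) {a : Fin n → ℕ} (ha : a ∈ σ) {i : Fin n}
    (hi : a i ≠ 0) : SuppIn a ((pairGraph σ).connectedComponentMk i).supp := by
  intro k hk
  rw [SimpleGraph.ConnectedComponent.mem_supp_iff, SimpleGraph.ConnectedComponent.eq]
  by_cases hki : k = i
  · exact hki ▸ .rfl
  · exact SimpleGraph.Adj.reachable ⟨hki, hσ a ha k i hki hk hi⟩

lemma suppIn_supp_iff (hσ : PairClosed σ) {a : Fin n → ℕ} (ha : a ∈ σ) {i : Fin n} (hi : a i ≠ 0)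
    {c : (pairGraph σ).ConnectedComponent} :
    SuppIn a c.supp ↔ c = (pairGraph σ).connectedComponentMk i :=
  ⟨fun h => (h i hi).symm, fun h => h ▸ suppIn_supp_of_ne_zero hσ ha hi⟩

end SkewDiagram

section Components

variable {n : ℕ} {σ : Finset (Fin n → ℕ)}

noncomputable def componentPts (c : (pairGraph σ).ConnectedComponent) : Finset (Fin n → ℕ) := by
  classical exact σ.filter (SuppIn · c.supp)

lemma mem_componentPts {c : (pairGraph σ).ConnectedComponent} {a : Fin n → ℕ} :
    a ∈ componentPts c ↔ a ∈ σ ∧ SuppIn a c.supp := by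
  classical
  simp only [componentPts, mem_filter]

lemma single_add_single_mem_componentPts {c : (pairGraph σ).ConnectedComponent} {u v : Fin n}
    (huv : (pairGraph σ).Adj u v) (hu : u ∈ c.supp) (hv : v ∈ c.supp) :
    Pi.single u 1 + Pi.single v 1 ∈ componentPts c := by
  refine mem_componentPts.2 ⟨huv.2, fun k hk => ?_⟩
  rcases single_add_single_ne_zero_iff.1 hk with rfl | rfl <;> assumption

lemma card_supp_le_card_componentPts_add_one (c : (pairGraph σ).ConnectedComponent) :
    Nat.card c.supp ≤ #(componentPts c) + 1 := by
  have hmem (e : c.toSimpleGraph.edgeSet) : edgePt (e.1.map Subtype.val) ∈ componentPts c := by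
    obtain ⟨e, he⟩ := e
    induction e using Sym2.ind with
    | h u v => exact single_add_single_mem_componentPts he u.2 v.2
  calc Nat.card c.supp ≤ Nat.card c.toSimpleGraph.edgeSet + 1 :=
        c.connected_toSimpleGraph.card_vert_le_card_edgeSet_add_one
    _ ≤ #(componentPts c) + 1 := by
        gcongr
        rw [← Nat.card_eq_finsetCard]
        exact Nat.card_le_card_of_injective (fun e => ⟨_, hmem e⟩) fun e e' h =>
          Subtype.val_injective <| Sym2.map.injective Subtype.val_injective <|
            edgePt_injective (congrArg Subtype.val h)

lemma one_le_card_componentPts (hσ : PairClosed σ) (hcover : ∀ i, ∃ a ∈ σ, a i ≠ 0)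
    (c : (pairGraph σ).ConnectedComponent) : 1 ≤ #(componentPts c) := by
  induction c using SimpleGraph.ConnectedComponent.ind with
  | h i =>
    obtain ⟨a, ha, hai⟩ := hcover i
    exact card_pos.2 ⟨a, mem_componentPts.2 ⟨ha, suppIn_supp_of_ne_zero hσ ha hai⟩⟩

lemma adj_of_supp_eq_pair {c : (pairGraph σ).ConnectedComponent} {i j : Fin n} (hij : i ≠ j)
    (hc : c.supp = {i, j}) : (pairGraph σ).Adj i j := by
  have hi : i ∈ c.supp := hc ▸ Set.mem_insert i _
  obtain ⟨p⟩ := c.reachable_of_mem_supp hi (hc ▸ Set.mem_insert_of_mem i (Set.mem_singleton j))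
  have hadj := p.adj_snd (SimpleGraph.Walk.not_nil_of_ne hij)
  have hsnd : p.snd ∈ c.supp := c.mem_supp_of_adj_mem_supp hi hadj
  rw [hc] at hsnd
  rcases hsnd with h | h
  · exact absurd (h ▸ hadj) (SimpleGraph.irrefl _)
  · exact h ▸ hadj

lemma isSigma2_supp_of_card_eq_two {c : (pairGraph σ).ConnectedComponent}
    (hc : Nat.card c.supp = 2) (hpts : #(componentPts c) = 1) : IsSigma2 σ c.supp := by
  obtain ⟨i, j, hij, hsupp⟩ := Set.ncard_eq_two.1 (Nat.card_coe_set_eq c.supp ▸ hc)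
  have hedge := single_add_single_mem_componentPts (adj_of_supp_eq_pair hij hsupp)
    (hsupp ▸ Set.mem_insert i _) (hsupp ▸ Set.mem_insert_of_mem i (Set.mem_singleton j))
  obtain ⟨p, hp⟩ := card_eq_one.1 hpts
  rw [hp, mem_singleton] at hedge
  refine ⟨i, j, hij, hsupp, ?_⟩
  rw [← coe_singleton, hedge, ← hp]
  ext a
  exact mem_componentPts.symm

open scoped Classical in
lemma two_mul_card_supp_le (hσ : PairClosed σ) (hcover : ∀ i, ∃ a ∈ σ, a i ≠ 0)
    (c : (pairGraph σ).ConnectedComponent) :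
    2 * Nat.card c.supp ≤ 3 * #(componentPts c) + if IsSigma2 σ c.supp then 1 else 0 := by
  have h1 := one_le_card_componentPts hσ hcover c
  have h2 := card_supp_le_card_componentPts_add_one c
  by_cases hs : 2 * Nat.card c.supp ≤ 3 * #(componentPts c)
  · omega
  · rw [if_pos (isSigma2_supp_of_card_eq_two (by omega) (by omega))]
    omega

lemma sum_card_componentPts [Fintype (pairGraph σ).ConnectedComponent] (hσ : PairClosed σ)
    (h0 : 0 ∉ σ) : ∑ c : (pairGraph σ).ConnectedComponent, #(componentPts c) = #σ := by
  classical
  have hcomp (a) (ha : a ∈ σ) :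
      ∑ c : (pairGraph σ).ConnectedComponent, (if SuppIn a c.supp then 1 else 0) = 1 := by
    obtain ⟨i, hi⟩ : ∃ i, a i ≠ 0 := Function.ne_iff.1 (ne_of_mem_of_not_mem ha h0)
    simp_rw [suppIn_supp_iff hσ ha hi, sum_ite_eq', mem_univ, if_true]
  calc ∑ c : (pairGraph σ).ConnectedComponent, #(componentPts c) =
        ∑ c : (pairGraph σ).ConnectedComponent, ∑ a ∈ σ, if SuppIn a c.supp then 1 else 0 := by
        simp_rw [componentPts, card_filter]
    _ = #σ := by rw [sum_comm, sum_congr rfl hcomp, card_eq_sum_ones]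

lemma card_sigma2_components_le (hσ : PairClosed σ) :
    Nat.card {c : (pairGraph σ).ConnectedComponent // IsSigma2 σ c.supp} ≤
      Nat.card {B : Set (Fin n) // IsBlock σ B ∧ IsSigma2 σ B} :=
  Nat.card_le_card_of_injective (fun c => ⟨c.1.supp, isBlock_supp hσ c.1, c.2⟩) fun _ _ h =>
    Subtype.ext <| SimpleGraph.ConnectedComponent.supp_injective (congrArg Subtype.val h)

theorem two_mul_le_three_mul_card_add_card_sigma2 (hσ : PairClosed σ) (h0 : 0 ∉ σ)
    (hcover : ∀ i, ∃ a ∈ σ, a i ≠ 0) :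
    2 * n ≤ 3 * #σ + Nat.card {B : Set (Fin n) // IsBlock σ B ∧ IsSigma2 σ B} := by
  classical
  calc 2 * n = ∑ c : (pairGraph σ).ConnectedComponent, 2 * Nat.card c.supp := by
        rw [← mul_sum, SimpleGraph.sum_card_supp_eq_card, Fintype.card_fin]
    _ ≤ ∑ c, (3 * #(componentPts c) + if IsSigma2 σ c.supp then 1 else 0) :=
        sum_le_sum fun c _ => two_mul_card_supp_le hσ hcover c
    _ = 3 * #σ + Nat.card {c : (pairGraph σ).ConnectedComponent // IsSigma2 σ c.supp} := by
        rw [sum_add_distrib, ← mul_sum, sum_card_componentPts hσ h0, sum_boole,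
          Nat.card_eq_fintype_card, Fintype.card_subtype]
        rfl
    _ ≤ _ := by gcongr; exact card_sigma2_components_le hσ

end Components

lemma card_mu (n : ℕ) : #(mu n) = n + 1 := by
  have hinj : Function.Injective fun i : Fin n => (Pi.single i 1 : Fin n → ℕ) := fun i j h => by
    simpa [Pi.single_apply, eq_comm] using congrFun h i
  rw [mu, card_insert_of_notMem, card_image_of_injective _ hinj, card_univ, Fintype.card_fin]
  simp

section Ferrers

variable {n : ℕ}

lemma single_add_single_notMem_mu {i j : Fin n} (hij : i ≠ j) :
    Pi.single i 1 + Pi.single j 1 ∉ mu n := by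
  have hi : (Pi.single i 1 + Pi.single j 1 : Fin n → ℕ) i ≠ 0 :=
    single_add_single_ne_zero_iff.2 (.inl rfl)
  have hj : (Pi.single i 1 + Pi.single j 1 : Fin n → ℕ) j ≠ 0 :=
    single_add_single_ne_zero_iff.2 (.inr rfl)
  simp only [mu, mem_insert, mem_image, mem_univ, true_and, not_or, not_exists]
  refine ⟨fun h => hi (h ▸ rfl), fun k hk => ?_⟩
  rw [← hk] at hi hj
  simp only [Pi.single_apply, ne_eq, ite_eq_right_iff, not_forall] at hi hj
  exact hij (hi.1.trans hj.1.symm)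

lemma zero_notMem_sdiff_mu (F : Finset (Fin n → ℕ)) : 0 ∉ F \ mu n :=
  fun h => (mem_sdiff.1 h).2 (mem_insert_self 0 _)

lemma pairClosed_sdiff_mu {F : Finset (Fin n → ℕ)} (hF : IsFerrers F) : PairClosed (F \ mu n) := by
  intro a ha i j hij hi hj
  rw [mem_sdiff] at ha ⊢
  refine ⟨hF.2 a ha.1 _ fun k => ?_, single_add_single_notMem_mu hij⟩
  by_cases hki : k = i <;> by_cases hkj : k = j <;> subst_vars <;>
    simp_all [Nat.one_le_iff_ne_zero]

lemma exists_ne_zero_of_rdim_eq {F : Finset (Fin n → ℕ)} (h : rdim F = n) (i : Fin n) :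
    ∃ a ∈ F \ mu n, a i ≠ 0 := by
  by_contra hi
  exact (Finite.card_subtype_lt (p := fun i => ∃ a ∈ F \ mu n, a i ≠ 0) hi).ne
    (h.trans (Nat.card_fin n).symm)

end Ferrers

theorem statement8_general (m x : ℕ) (F : Finset (Fin x → ℕ))
    (hF : IsFerrers F) (hmu : mu x ⊆ F) (hcard : F.card = m + x + 1)
    (hrd : rdim F = x) :
    2 * x - 3 * m ≤
      Nat.card {B : Set (Fin x) // IsBlock (F \ mu x) B ∧ IsSigma2 (F \ mu x) B} := by
  have hσ : #(F \ mu x) = m := by rw [card_sdiff_of_subset hmu, hcard, card_mu]; omega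
  have hbound := two_mul_le_three_mul_card_add_card_sigma2 (pairClosed_sdiff_mu hF)
    (zero_notMem_sdiff_mu F) (exists_ne_zero_of_rdim_eq hrd)
  omega

/-- if `λ ⊆ ℕ^x` is a Ferrers diagram with `m+x+1` elements containing `μ_x`,
of reduced dimension `x`, and `3m < 2x`, then at least `2x − 3m` components of `λ ∖ μ_x`
are of type `σ₂`. -/
theorem statement8 (m x : ℕ) (F : Finset (Fin x → ℕ))
    (hF : IsFerrers F) (hmu : mu x ⊆ F) (hcard : F.card = m + x + 1)
    (hrd : rdim F = x) (hdensity : 3 * m < 2 * x) :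
    2 * x - 3 * m ≤
      Nat.card {B : Set (Fin x) // IsBlock (F \ mu x) B ∧ IsSigma2 (F \ mu x) B} :=
  statement8_general m x F hF hmu hcard hrd
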